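/- Let d ∈ ℕ, d ≥ 1, let p ∈ ℕ, p ≥ 1, let K ⊆ ℝ^{d+1} be open with (x_K,t_K) ∈ K, let V ∈ C^{max(p−2,0)}(K;ℝ), and let h_K > 0. Write q ∈ ℙ^p in the scaled monomial basis as q(x,t) = Σ_{|j|≤p} C_j ((x−x_K)/h_K)^{j_x} ((t−t_K)/h_K)^{j_t} with complex coefficients C_j. If q ∈ QT^p(K), then for every multi-index j = (j_x, j_t) with |j| ≤ p−2 the coefficients satisfy C_{(j_x+2e_1, j_t)} = 1/((j_{x_1}+1)(j_{x_1}+2)) · ( −2 i h_K (j_t+1) C_{(j_x, j_t+1)} − Σ_{ℓ=2}^d (j_{x_ℓ}+1)(j_{x_ℓ}+2) C_{(j_x+2e_ℓ, j_t)} + 2 Σ_{z ≤ j} (h_K^{|j|−|z|+2}/(j−z)!) D^{j−z}V(x_K,t_K) C_z ), where e_ℓ denotes the ℓ-th canonical basis vector of ℝ^d and z ≤ j means z_{x_i} ≤ j_{x_i} for 1 ≤ i ≤ d and z_t ≤ j_t. -/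

import Mathlib

open scoped BigOperators
open MeasureTheory

noncomputable section

/-- Space–time points `(x, t)` with `x ∈ ℝ^d`, `t ∈ ℝ`. -/
abbrev Pt (d : ℕ) : Type := (Fin d → ℝ) × ℝ

/-- Multi-indices `j = (j_x, j_t)`. -/
abbrev MI (d : ℕ) : Type := (Fin d → ℕ) × ℕ

/-- `|j|`, the total order of a multi-index. -/
def MI.deg {d : ℕ} (j : MI d) : ℕ := (∑ ℓ, j.1 ℓ) + j.2

/-- `j!`. -/
def MI.fact {d : ℕ} (j : MI d) : ℕ := (∏ ℓ, Nat.factorial (j.1 ℓ)) * Nat.factorial j.2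

/-- componentwise difference of multi-indices. -/
def MI.sub {d : ℕ} (j z : MI d) : MI d := (fun ℓ => j.1 ℓ - z.1 ℓ, j.2 - z.2)

/-- add `k` to the spatial component `ℓ` of a multi-index. -/
def MI.addX {d : ℕ} (j : MI d) (ℓ : Fin d) (k : ℕ) : MI d :=
  (fun m => j.1 m + if m = ℓ then k else 0, j.2)

/-- spatial canonical basis vector in `ℝ^d`. -/
def eVecd (d : ℕ) (ℓ : Fin d) : Fin d → ℝ := fun m => if m = ℓ then 1 else 0

/-- spatial unit direction in space–time. -/
def eDir (d : ℕ) (ℓ : Fin d) : Pt d := (eVecd d ℓ, 0)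

/-- time unit direction in space–time. -/
def tDir (d : ℕ) : Pt d := (0, 1)

/-- directional (partial) derivative. -/
def pd {d : ℕ} (v : Pt d) (f : Pt d → ℂ) : Pt d → ℂ := fun z => fderiv ℝ f z v

/-- the multi-index partial derivative `D^j = ∂_{x_1}^{j_1} ⋯ ∂_{x_d}^{j_d} ∂_t^{j_t}`. -/
def Dmi {d : ℕ} (j : MI d) (f : Pt d → ℂ) : Pt d → ℂ :=
  (List.finRange d).foldr (fun ℓ g => (pd (eDir d ℓ))^[j.1 ℓ] g) ((pd (tDir d))^[j.2] f)

/-- the Schrödinger operator `S f = i ∂_t f + ½ Δ_x f − V f`. -/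
def Sop {d : ℕ} (V : Pt d → ℝ) (f : Pt d → ℂ) : Pt d → ℂ := fun z =>
  Complex.I * pd (tDir d) f z
    + (1 / 2) * ∑ ℓ : Fin d, pd (eDir d ℓ) (pd (eDir d ℓ) f) z
    - (V z : ℂ) * f z

/-- all multi-indices with every component `≤ p`. -/
def MIall (d p : ℕ) : Finset (MI d) :=
  (Finset.univ : Finset ((Fin d → Fin (p + 1)) × Fin (p + 1))).image
    (fun j => ((fun ℓ => (j.1 ℓ : ℕ)), (j.2 : ℕ)))

/-- multi-indices with `|j| ≤ p`. -/
def MIle (d p : ℕ) : Finset (MI d) := (MIall d p).filter (fun j => MI.deg j ≤ p)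

/-- multi-indices with `|j| < m`. -/
def MIlt (d m : ℕ) : Finset (MI d) := (MIall d m).filter (fun j => MI.deg j < m)

/-- multi-indices with `|j| = m`. -/
def MIeq (d m : ℕ) : Finset (MI d) := (MIall d m).filter (fun j => MI.deg j = m)

/-- multi-indices `z ≤ j` (componentwise). -/
def MIbelow {d : ℕ} (j : MI d) : Finset (MI d) :=
  (MIall d (MI.deg j)).filter (fun z => (∀ ℓ, z.1 ℓ ≤ j.1 ℓ) ∧ z.2 ≤ j.2)

/-- monomial of multi-index `j`, centered at `c`, scaled by `h`. -/
def monoC {d : ℕ} (c : Pt d) (h : ℝ) (j : MI d) : Pt d → ℂ := fun z =>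
  (∏ ℓ, (((z.1 ℓ - c.1 ℓ) / h : ℝ) : ℂ) ^ j.1 ℓ) * (((z.2 - c.2) / h : ℝ) : ℂ) ^ j.2

/-- `ℙ^p`: polynomial functions `ℝ^{d+1} → ℂ` of total degree `≤ p`. -/
def PolySet (d p : ℕ) : Set (Pt d → ℂ) :=
  {q | ∃ C : MI d → ℂ, ∀ z, q z = ∑ j ∈ MIle d p, C j * monoC ((0 : Fin d → ℝ), (0 : ℝ)) 1 j z}

/-- the quasi-Trefftz space `QT^p(K)` for the potential `V`, centered at `c`:
polynomials of degree `≤ p` with `D^j(Sq)(c) = 0` for all `|j| ≤ p − 2`. -/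
def QTset (d p : ℕ) (V : Pt d → ℝ) (c : Pt d) : Set (Pt d → ℂ) :=
  {q | q ∈ PolySet d p ∧ ∀ j : MI d, MI.deg j + 2 ≤ p → Dmi j (Sop V q) c = 0}

/-- Taylor polynomial of order `m` (degree `m − 1`) centered at `c`. -/
def TaylorP {d : ℕ} (m : ℕ) (c : Pt d) (φ : Pt d → ℂ) : Pt d → ℂ := fun z =>
  ∑ j ∈ MIlt d m, ((MI.fact j : ℂ))⁻¹ * Dmi j φ c * monoC c 1 j z

/-- Euclidean distance on `ℝ^{d+1} = ℝ^d × ℝ`. -/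
def eDist {d : ℕ} (z w : Pt d) : ℝ :=
  Real.sqrt ((∑ ℓ, (z.1 ℓ - w.1 ℓ) ^ 2) + (z.2 - w.2) ^ 2)

/-!
Differentiating the scaled monomials centred at `(x_K, t_K)` explicitly shows that the Taylor
coefficient `D^k q(x_K, t_K)` is `k! h^{-|k|} C_k`, and `D^j ∂_{x_ℓ}² q` at the centre is the
corresponding multiple of `C_{j + 2e_ℓ}`. The potential term `D^j (V q)` is expanded by the Leibniz
rule, which only needs `V` to be `C^{|j|}` near the centre; it is proved for an arbitrary ordered
composition of iterated directional derivatives, one direction at a time. Multiplying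
`D^j (S q)(x_K, t_K) = 0` by `h^{|j|+2} / j!` and solving for `C_{j + 2e_1}` gives the recurrence.
-/

open Set Function

section DirectionalDerivative

variable {d : ℕ} {U : Set (Pt d)} {v : Pt d} {f g : Pt d → ℂ} {x : Pt d}

theorem pd_congr (hU : IsOpen U) (h : EqOn f g U) : EqOn (pd v f) (pd v g) U := fun x hx => by
  simp only [pd, (h.eventuallyEq_of_mem (hU.mem_nhds hx)).fderiv_eq]

theorem pd_sum_const_mul {ι : Type*} {s : Finset ι} (c : ι → ℂ) {F : ι → Pt d → ℂ}
    (hF : ∀ i ∈ s, DifferentiableAt ℝ (F i) x) :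
    pd v (fun z => ∑ i ∈ s, c i * F i z) x = ∑ i ∈ s, c i * pd v (F i) x := by
  simp only [pd]
  rw [fderiv_fun_sum fun i hi => (hF i hi).const_mul (c i), sum_apply]
  exact Finset.sum_congr rfl fun i hi => by rw [fderiv_const_mul (hF i hi)]; rfl

theorem pd_mul (hf : DifferentiableAt ℝ f x) (hg : DifferentiableAt ℝ g x) :
    pd v (fun z => f z * g z) x = pd v f x * g x + f x * pd v g x := by
  simp only [pd, fderiv_fun_mul hf hg, add_apply, smul_apply, smul_eq_mul]
  ring

theorem contDiffOn_pd (hU : IsOpen U) {m : ℕ} (hf : ContDiffOn ℝ (m + 1 : ℕ) f U) (v : Pt d) :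
    ContDiffOn ℝ m (pd v f) U :=
  (hf.fderiv_of_isOpen hU (by push_cast; rfl)).clm_apply contDiffOn_const

theorem ContDiffOn.differentiableAt_of_isOpen (hU : IsOpen U) {m : ℕ}
    (hf : ContDiffOn ℝ (m + 1 : ℕ) f U) (hx : x ∈ U) : DifferentiableAt ℝ f x :=
  (hf.contDiffAt (hU.mem_nhds hx)).differentiableAt (by simp)

theorem contDiffOn_foldr_pd (hU : IsOpen U) (vs : List (Pt d)) {m N : ℕ}
    (hf : ContDiffOn ℝ N f U) (hN : vs.length + m ≤ N) : ContDiffOn ℝ m (vs.foldr pd f) U := by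
  induction vs generalizing m with
  | nil => exact hf.of_le (by simpa using hN)
  | cons w vs ih =>
    rw [List.length_cons] at hN
    exact contDiffOn_pd hU (ih (m := m + 1) (by omega)) w

theorem differentiableAt_foldr_pd (hU : IsOpen U) (vs : List (Pt d)) {N : ℕ}
    (hf : ContDiffOn ℝ N f U) (hN : vs.length < N) (hx : x ∈ U) :
    DifferentiableAt ℝ (vs.foldr pd f) x :=
  (contDiffOn_foldr_pd hU vs (m := 1) hf hN).differentiableAt_of_isOpen hU (m := 0) hx

theorem foldr_pd_congr (hU : IsOpen U) (vs : List (Pt d)) (h : EqOn f g U) :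
    EqOn (vs.foldr pd f) (vs.foldr pd g) U := by
  induction vs with
  | nil => exact h
  | cons w vs ih => exact pd_congr hU ih

theorem foldr_pd_sum_const_mul (hU : IsOpen U) (vs : List (Pt d)) {ι : Type*} {s : Finset ι}
    (c : ι → ℂ) {F : ι → Pt d → ℂ} (hF : ∀ i ∈ s, ContDiffOn ℝ vs.length (F i) U) :
    EqOn (vs.foldr pd fun z => ∑ i ∈ s, c i * F i z)
      (fun z => ∑ i ∈ s, c i * vs.foldr pd (F i) z) U := by
  induction vs with
  | nil => exact fun _ _ => rfl
  | cons w vs ih =>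
    refine fun x hx => (pd_congr hU (ih fun i hi => (hF i hi).of_le ?_) hx).trans ?_
    · simp
    · exact pd_sum_const_mul c fun i hi =>
        differentiableAt_foldr_pd hU vs (hF i hi) (by simp) hx

theorem iterate_pd_eq_foldr (v : Pt d) (k : ℕ) (f : Pt d → ℂ) :
    (pd v)^[k] f = (List.replicate k v).foldr pd f := by
  induction k with
  | zero => rfl
  | succ k ih => rw [iterate_succ_apply', ih]; rfl

theorem iterate_pd_mul (hU : IsOpen U) (v : Pt d) {k : ℕ} (hf : ContDiffOn ℝ k f U)
    (hg : ContDiffOn ℝ k g U) :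
    EqOn ((pd v)^[k] fun z => f z * g z) (fun z => ∑ i ∈ Finset.range (k + 1),
      (k.choose i : ℂ) * ((pd v)^[i] f z * (pd v)^[k - i] g z)) U := by
  induction k with
  | zero => intro x _; simp
  | succ k ih =>
    intro x hx
    have hdiff : ∀ {F : Pt d → ℂ}, ContDiffOn ℝ (k + 1 : ℕ) F U → ∀ i ≤ k,
        DifferentiableAt ℝ ((pd v)^[i] F) x := fun hF i hi => by
      rw [iterate_pd_eq_foldr]
      exact differentiableAt_foldr_pd hU _ hF (by rw [List.length_replicate]; omega) hx
    rw [iterate_succ_apply', pd_congr hU (ih (hf.of_le (by simp)) (hg.of_le (by simp))) hx,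
      pd_sum_const_mul (F := fun i z => (pd v)^[i] f z * (pd v)^[k - i] g z) _ fun i hi =>
        (hdiff hf i (Finset.mem_range_succ_iff.mp hi)).mul (hdiff hg (k - i) (by omega))]
    dsimp only
    rw [Finset.sum_choose_succ_mul (fun i j => (pd v)^[i] f x * (pd v)^[j] g x) k,
      ← Finset.sum_add_distrib]
    refine Finset.sum_congr rfl fun i hi => ?_
    have hik := Finset.mem_range_succ_iff.mp hi
    rw [pd_mul (hdiff hf i hik) (hdiff hg (k - i) (by omega)), ← iterate_succ_apply' (pd v),
      ← iterate_succ_apply' (pd v), Nat.succ_eq_add_one, Nat.succ_eq_add_one,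
      show k - i + 1 = k + 1 - i by omega]
    ring

end DirectionalDerivative

section MultiIndexSum

variable {ι : Type*} [DecidableEq ι]

theorem update_zero_eq_zero_of_not_mem {a : ι} {L : List ι} {n : ι → ℕ}
    (hn : ∀ i ∉ a :: L, n i = 0) {i : ι} (hi : i ∉ L) : update n a 0 i = 0 := by
  rcases eq_or_ne i a with rfl | hia
  · exact update_self ..
  · rw [update_of_ne hia]
    exact hn i (List.not_mem_cons_of_ne_of_not_mem hia hi)

variable [Fintype ι]

theorem sum_Iic_eq_sum_Iic_update_zero {M : Type*} [AddCommMonoid M] (n : ι → ℕ) (a : ι)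
    (G : (ι → ℕ) → M) :
    ∑ m ∈ Finset.Iic n, G m =
      ∑ m ∈ Finset.Iic (update n a 0), ∑ r ∈ Finset.range (n a + 1), G (update m a r) := by
  rw [← Finset.sum_product']
  symm
  refine Finset.sum_nbij' (fun p => update p.1 a p.2) (fun m => (update m a 0, m a))
    ?_ ?_ ?_ ?_ fun _ _ => rfl
  · rintro ⟨m, r⟩ h
    simp only [Finset.mem_product, Finset.mem_Iic, Finset.mem_range, Pi.le_def] at h
    refine Finset.mem_Iic.mpr fun i => ?_
    rcases eq_or_ne i a with rfl | hi
    · rw [update_self]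
      exact Nat.lt_succ_iff.mp h.2
    · simpa [hi] using h.1 i
  · intro m h
    simp only [Finset.mem_Iic, Pi.le_def] at h
    refine Finset.mem_product.mpr ⟨Finset.mem_Iic.mpr fun i => ?_,
      Finset.mem_range_succ_iff.mpr (h a)⟩
    rcases eq_or_ne i a with rfl | hi
    · simp
    · simpa [hi] using h i
  · rintro ⟨m, r⟩ h
    simp only [Finset.mem_product, Finset.mem_Iic, Pi.le_def] at h
    have hma : m a = 0 := by simpa using h.1 a
    simp [← hma]
  · intro m _
    simp

theorem prod_choose_update (n m : ι → ℕ) (a : ι) (r : ℕ) (hm : m a = 0) :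
    ∏ i, (n i).choose (update m a r i) = (n a).choose r * ∏ i, (update n a 0 i).choose (m i) := by
  rw [← Finset.mul_prod_erase _ _ (Finset.mem_univ a),
    ← Finset.mul_prod_erase _ _ (Finset.mem_univ a)]
  simp only [update_self, hm, Nat.choose_zero_right, one_mul]
  congr 1
  exact Finset.prod_congr rfl fun i hi => by
    rw [update_of_ne (Finset.ne_of_mem_erase hi), update_of_ne (Finset.ne_of_mem_erase hi)]

end MultiIndexSum

section IteratedPartial

variable {d : ℕ} {ι : Type*} (v : ι → Pt d) {U : Set (Pt d)} {f g : Pt d → ℂ}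

def iterPd (L : List ι) (n : ι → ℕ) (f : Pt d → ℂ) : Pt d → ℂ :=
  L.foldr (fun i g => (pd (v i))^[n i] g) f

theorem iterPd_eq_foldr_pd (L : List ι) (n : ι → ℕ) (f : Pt d → ℂ) :
    iterPd v L n f = (L.flatMap fun i => List.replicate (n i) (v i)).foldr pd f := by
  induction L with
  | nil => rfl
  | cons a L ih => simp [iterPd, List.foldr_append, iterate_pd_eq_foldr, ← ih]

theorem length_flatMap_replicate (L : List ι) (n : ι → ℕ) :
    (L.flatMap fun i => List.replicate (n i) (v i)).length = (L.map n).sum := by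
  simp [List.length_flatMap]

theorem iterPd_congr_index {L : List ι} {n n' : ι → ℕ} (h : ∀ i ∈ L, n i = n' i) :
    iterPd v L n = iterPd v L n' := by
  funext f
  induction L with
  | nil => rfl
  | cons a L ih =>
    simp only [iterPd, List.foldr_cons] at ih ⊢
    rw [h a List.mem_cons_self, ih fun i hi => h i (List.mem_cons_of_mem a hi)]

theorem iterPd_cons_update [DecidableEq ι] {a : ι} {L : List ι} (ha : a ∉ L) (n : ι → ℕ)
    (r : ℕ) (f : Pt d → ℂ) :
    iterPd v (a :: L) (update n a r) f = (pd (v a))^[r] (iterPd v L n f) := by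
  rw [iterPd, List.foldr_cons, update_self, ← iterPd,
    iterPd_congr_index v fun i hi => update_of_ne (ne_of_mem_of_not_mem hi ha) r n]

theorem iterPd_cons [DecidableEq ι] {a : ι} {L : List ι} (ha : a ∉ L) (n : ι → ℕ)
    (f : Pt d → ℂ) : iterPd v (a :: L) n f = (pd (v a))^[n a] (iterPd v L (update n a 0) f) := by
  rw [← iterPd_cons_update v ha, update_idem, update_eq_self]

theorem contDiffOn_iterPd (hU : IsOpen U) (L : List ι) (n : ι → ℕ) {m N : ℕ}
    (hf : ContDiffOn ℝ N f U) (hN : (L.map n).sum + m ≤ N) :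
    ContDiffOn ℝ m (iterPd v L n f) U := by
  rw [iterPd_eq_foldr_pd]
  exact contDiffOn_foldr_pd hU _ hf (by rwa [length_flatMap_replicate])

theorem iterPd_sum_const_mul (hU : IsOpen U) (L : List ι) (n : ι → ℕ) {κ : Type*}
    {s : Finset κ} (c : κ → ℂ) {F : κ → Pt d → ℂ} {N : ℕ}
    (hF : ∀ k ∈ s, ContDiffOn ℝ N (F k) U) (hN : (L.map n).sum ≤ N) :
    EqOn (iterPd v L n fun z => ∑ k ∈ s, c k * F k z)
      (fun z => ∑ k ∈ s, c k * iterPd v L n (F k) z) U := by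
  simp only [iterPd_eq_foldr_pd]
  exact foldr_pd_sum_const_mul hU _ c fun k hk =>
    (hF k hk).of_le (by rw [length_flatMap_replicate]; exact_mod_cast hN)

theorem iterPd_mul [Fintype ι] [DecidableEq ι] (hU : IsOpen U) {L : List ι} (hL : L.Nodup)
    {n : ι → ℕ} (hn : ∀ i ∉ L, n i = 0) {N : ℕ} (hf : ContDiffOn ℝ N f U)
    (hg : ContDiffOn ℝ N g U) (hN : (L.map n).sum ≤ N) :
    EqOn (iterPd v L n fun z => f z * g z) (fun z => ∑ m ∈ Finset.Iic n,
      ((∏ i, (n i).choose (m i) : ℕ) : ℂ) * (iterPd v L m f z * iterPd v L (n - m) g z)) U := by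
  induction L generalizing n with
  | nil =>
    obtain rfl : n = 0 := funext fun i => hn i List.not_mem_nil
    have : Finset.Iic (0 : ι → ℕ) = {0} := by ext m; simp [funext_iff]
    intro z _
    simp [this, iterPd]
  | cons a L ih =>
    obtain ⟨haL, hL⟩ := List.nodup_cons.mp hL
    set n' := update n a 0
    have hN' : n a + (L.map n').sum ≤ N := by
      rwa [List.map_congr_left fun i hi => update_of_ne (ne_of_mem_of_not_mem hi haL) _ _,
        ← List.sum_cons, ← List.map_cons]
    have hreg : ∀ {F : Pt d → ℂ}, ContDiffOn ℝ N F U → ∀ m ≤ n',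
        ContDiffOn ℝ (n a) (iterPd v L m F) U := fun hF m hm =>
      contDiffOn_iterPd v hU L m hF
        (le_trans (by rw [add_comm]; gcongr; exact List.sum_le_sum fun i _ => hm i) hN')
    intro z hz
    rw [iterPd_cons v haL, iterate_pd_eq_foldr,
      foldr_pd_congr hU _
        (ih hL (n := n') (fun i => update_zero_eq_zero_of_not_mem hn) (by omega)) hz,
      foldr_pd_sum_const_mul hU _ _
        (F := fun m z => iterPd v L m f z * iterPd v L (n' - m) g z) (fun m hm => by
          simpa using (hreg hf m (Finset.mem_Iic.mp hm)).mul (hreg hg (n' - m) tsub_le_self)) hz]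
    dsimp only
    rw [sum_Iic_eq_sum_Iic_update_zero n a]
    refine Finset.sum_congr rfl fun m hm => ?_
    rw [← iterate_pd_eq_foldr, iterate_pd_mul hU (v a) (hreg hf m (Finset.mem_Iic.mp hm))
      (hreg hg (n' - m) tsub_le_self) hz, Finset.mul_sum]
    refine Finset.sum_congr rfl fun r _ => ?_
    have hma : m a = 0 := by simpa [n'] using Finset.mem_Iic.mp hm a
    have hsub : n - update m a r = update (n' - m) a (n a - r) := by
      ext i
      rcases eq_or_ne i a with rfl | hia
      · simp
      · simp [n', hia]
    rw [hsub, iterPd_cons_update v haL, iterPd_cons_update v haL, prod_choose_update n m a r hma]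
    push_cast
    ring

end IteratedPartial

section SpaceTimeIndex

variable {d : ℕ}

/- Space–time directions are indexed by `Option (Fin d)`: `some ℓ` is `x_ℓ` and `none` is `t`.
`stList d` lists them in the order of `Dmi`, outermost first. -/

def stDir : Option (Fin d) → Pt d
  | none => tDir d
  | some ℓ => eDir d ℓ

def stList (d : ℕ) : List (Option (Fin d)) := (List.finRange d).map some ++ [none]

theorem mem_stList (i : Option (Fin d)) : i ∈ stList d := by
  cases i <;> simp [stList]

theorem nodup_stList : (stList d).Nodup := by
  simp [stList, List.nodup_append, List.Nodup.map (Option.some_injective _) (List.nodup_finRange d)]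

@[to_additive]
theorem prod_map_stList {M : Type*} [CommMonoid M] (g : Option (Fin d) → M) :
    ((stList d).map g).prod = ∏ i, g i := by
  simp [stList, Fintype.prod_option, Fin.prod_univ_def, mul_comm, Function.comp_def]

def MI.equivPi : MI d ≃o (Option (Fin d) → ℕ) where
  toFun j i := i.elim j.2 j.1
  invFun m := (fun ℓ => m (some ℓ), m none)
  left_inv _ := rfl
  right_inv m := funext fun i => by cases i <;> rfl
  map_rel_iff' {j k} := by
    simp only [Equiv.coe_fn_mk, Pi.le_def, Prod.le_def, Option.forall, Option.elim]
    exact and_comm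

@[simp] theorem MI.equivPi_none (j : MI d) : MI.equivPi j none = j.2 := rfl

@[simp] theorem MI.equivPi_some (j : MI d) (ℓ : Fin d) : MI.equivPi j (some ℓ) = j.1 ℓ := rfl

theorem MI.equivPi_sub (j k : MI d) : MI.equivPi (MI.sub j k) = MI.equivPi j - MI.equivPi k :=
  funext fun i => by cases i <;> rfl

theorem MI.equivPi_addX (j : MI d) (ℓ : Fin d) (k : ℕ) :
    MI.equivPi (MI.addX j ℓ k) = MI.equivPi j + Pi.single (some ℓ) k := by
  funext i
  cases i <;> simp [MI.addX, Pi.single_apply]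

theorem MI.deg_eq_sum (j : MI d) : MI.deg j = ∑ i, MI.equivPi j i := by
  simp [MI.deg, Fintype.sum_option, add_comm]

theorem MI.fact_eq_prod (j : MI d) : MI.fact j = ∏ i, (MI.equivPi j i).factorial := by
  simp [MI.fact, Fintype.prod_option, mul_comm]

theorem MI.fact_pos (j : MI d) : 0 < MI.fact j := by
  unfold MI.fact
  positivity

theorem MI.deg_mono {k j : MI d} (h : k ≤ j) : MI.deg k ≤ MI.deg j := by
  simp only [MI.deg_eq_sum]
  exact Finset.sum_le_sum fun i _ => MI.equivPi.monotone h i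

theorem MI.deg_addX (j : MI d) (ℓ : Fin d) (k : ℕ) : MI.deg (MI.addX j ℓ k) = MI.deg j + k := by
  simp [MI.deg_eq_sum, MI.equivPi_addX, Finset.sum_add_distrib]

theorem MI.deg_succ_snd (j : MI d) : MI.deg (j.1, j.2 + 1) = MI.deg j + 1 := by
  simp [MI.deg, add_assoc]

theorem MI.fact_succ_snd (j : MI d) : MI.fact (j.1, j.2 + 1) = MI.fact j * (j.2 + 1) := by
  rw [MI.fact, MI.fact, Nat.factorial_succ]
  ring

def MI.choose (j k : MI d) : ℕ := ∏ i, (MI.equivPi j i).choose (MI.equivPi k i)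

theorem MI.choose_mul_fact_mul_fact {j k : MI d} (h : k ≤ j) :
    MI.choose j k * MI.fact k * MI.fact (MI.sub j k) = MI.fact j := by
  simp only [MI.choose, MI.fact_eq_prod, MI.equivPi_sub, ← Finset.prod_mul_distrib]
  exact Finset.prod_congr rfl fun i _ => Nat.choose_mul_factorial_mul_factorial
    (MI.equivPi.monotone h i)

theorem mem_MIall {p : ℕ} {k : MI d} : k ∈ MIall d p ↔ (∀ ℓ, k.1 ℓ ≤ p) ∧ k.2 ≤ p := by
  refine ⟨fun hk => ?_, fun hk => ?_⟩
  · obtain ⟨j, -, rfl⟩ := Finset.mem_image.mp hk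
    exact ⟨fun ℓ => Nat.lt_succ_iff.mp (j.1 ℓ).isLt, Nat.lt_succ_iff.mp j.2.isLt⟩
  · exact Finset.mem_image.mpr ⟨(fun ℓ => ⟨k.1 ℓ, Nat.lt_succ_of_le (hk.1 ℓ)⟩,
      ⟨k.2, Nat.lt_succ_of_le hk.2⟩), Finset.mem_univ _, rfl⟩

theorem MI.le_deg (k : MI d) : (∀ ℓ, k.1 ℓ ≤ MI.deg k) ∧ k.2 ≤ MI.deg k :=
  ⟨fun ℓ => le_add_right (Finset.single_le_sum (fun _ _ => Nat.zero_le _) (Finset.mem_univ ℓ)),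
    le_add_self⟩

theorem mem_MIle {p : ℕ} {k : MI d} : k ∈ MIle d p ↔ MI.deg k ≤ p := by
  refine ⟨fun h => (Finset.mem_filter.mp h).2, fun h => Finset.mem_filter.mpr ⟨?_, h⟩⟩
  exact mem_MIall.mpr ⟨fun ℓ => ((MI.le_deg k).1 ℓ).trans h, (MI.le_deg k).2.trans h⟩

theorem mem_MIbelow {k j : MI d} : k ∈ MIbelow j ↔ k ≤ j := by
  refine ⟨fun h => (Finset.mem_filter.mp h).2, fun h => Finset.mem_filter.mpr ⟨?_, h⟩⟩
  exact mem_MIall.mpr ⟨fun ℓ => (h.1 ℓ).trans ((MI.le_deg j).1 ℓ), h.2.trans (MI.le_deg j).2⟩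

end SpaceTimeIndex

section SpaceTimeDerivative

variable {d : ℕ} {U : Set (Pt d)} {f g : Pt d → ℂ} {N : ℕ}

theorem Dmi_eq_iterPd (j : MI d) (f : Pt d → ℂ) :
    Dmi j f = iterPd stDir (stList d) (MI.equivPi j) f := by
  simp [Dmi, iterPd, stList, List.foldr_append, List.foldr_map, stDir]

theorem Dmi_pd_tDir (j : MI d) (f : Pt d → ℂ) : Dmi j (pd (tDir d) f) = Dmi (j.1, j.2 + 1) f := by
  simp [Dmi, iterate_succ_apply]

theorem Dmi_sum_const_mul (hU : IsOpen U) {j : MI d} (hj : MI.deg j ≤ N) {κ : Type*}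
    {s : Finset κ} (c : κ → ℂ) {F : κ → Pt d → ℂ} (hF : ∀ k ∈ s, ContDiffOn ℝ N (F k) U) :
    EqOn (Dmi j fun z => ∑ k ∈ s, c k * F k z) (fun z => ∑ k ∈ s, c k * Dmi j (F k) z) U := by
  simp only [Dmi_eq_iterPd]
  exact iterPd_sum_const_mul stDir hU _ _ c hF (by rwa [sum_map_stList, ← MI.deg_eq_sum])

theorem Dmi_mul (hU : IsOpen U) {j : MI d} (hj : MI.deg j ≤ N) (hf : ContDiffOn ℝ N f U)
    (hg : ContDiffOn ℝ N g U) :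
    EqOn (Dmi j fun z => f z * g z) (fun z => ∑ k ∈ MIbelow j,
      (MI.choose j k : ℂ) * (Dmi k f z * Dmi (MI.sub j k) g z)) U := by
  intro z hz
  simp only [Dmi_eq_iterPd]
  rw [iterPd_mul stDir hU nodup_stList (fun i hi => absurd (mem_stList i) hi) hf hg
    (by rwa [sum_map_stList, ← MI.deg_eq_sum]) hz]
  symm
  refine Finset.sum_equiv MI.equivPi.toEquiv (fun k => ?_) fun k _ => ?_
  · simp [mem_MIbelow]
  · simp [MI.choose, MI.equivPi_sub]

end SpaceTimeDerivative

section Monomial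

variable {d : ℕ} (c : Pt d) (h : ℝ)

def stCoord : Option (Fin d) → Pt d →L[ℝ] ℝ
  | none => ContinuousLinearMap.snd ℝ _ _
  | some ℓ => (ContinuousLinearMap.proj ℓ).comp (ContinuousLinearMap.fst ℝ _ _)

theorem stCoord_stDir (k i : Option (Fin d)) : stCoord k (stDir i) = if k = i then 1 else 0 := by
  cases k <;> cases i <;> simp [stCoord, stDir, eDir, tDir, eVecd]

def stMono (m : Option (Fin d) → ℕ) (z : Pt d) : ℂ :=
  ∏ i, ((stCoord i (z - c) / h : ℝ) : ℂ) ^ m i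

theorem monoC_eq_stMono (j : MI d) : monoC c h j = stMono c h (MI.equivPi j) := by
  funext z
  simp [monoC, stMono, Fintype.prod_option, stCoord, mul_comm]

theorem contDiff_stMono (m : Option (Fin d) → ℕ) : ContDiff ℝ ⊤ (stMono c h m) := by
  refine contDiff_prod fun i _ => (Complex.ofRealCLM.contDiff.comp ?_).pow _
  exact ((stCoord i).contDiff.comp (contDiff_id.sub contDiff_const)).div_const h

theorem stMono_eq_mul_prod_erase (m : Option (Fin d) → ℕ) (i : Option (Fin d)) (z : Pt d) :
    stMono c h m z = ((stCoord i (z - c) / h : ℝ) : ℂ) ^ m i *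
      ∏ k ∈ Finset.univ.erase i, ((stCoord k (z - c) / h : ℝ) : ℂ) ^ m k :=
  (Finset.mul_prod_erase _ _ (Finset.mem_univ i)).symm

theorem stMono_center (m : Option (Fin d) → ℕ) : stMono c h m c = if m = 0 then 1 else 0 := by
  simp only [stMono, sub_self, map_zero, zero_div, Complex.ofReal_zero]
  split_ifs with hm
  · simp [hm]
  · obtain ⟨i, hi⟩ := Function.ne_iff.mp hm
    exact Finset.prod_eq_zero (Finset.mem_univ i) (zero_pow hi)

theorem pd_stMono (m : Option (Fin d) → ℕ) (i : Option (Fin d)) :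
    pd (stDir i) (stMono c h m) = fun z => (m i / h : ℂ) * stMono c h (m - Pi.single i 1) z := by
  funext z
  set A := ∏ k ∈ Finset.univ.erase i, ((stCoord k (z - c) / h : ℝ) : ℂ) ^ m k
  set a := stCoord i (z - c)
  have hline : (fun s : ℝ => stMono c h m (z + s • stDir i)) =
      fun s => A * (((a + s) / h : ℝ) : ℂ) ^ m i := by
    funext s
    rw [stMono_eq_mul_prod_erase c h m i, mul_comm]
    congr 1
    · refine Finset.prod_congr rfl fun k hk => ?_
      simp [add_sub_right_comm, stCoord_stDir, Finset.ne_of_mem_erase hk]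
    · simp [add_sub_right_comm, stCoord_stDir, a]
  have hderiv : HasLineDerivAt ℝ (stMono c h m)
      (A * ((m i : ℂ) * ((a / h : ℝ) : ℂ) ^ (m i - 1) * ((1 / h : ℝ) : ℂ))) z (stDir i) := by
    rw [HasLineDerivAt, hline]
    have := ((((hasDerivAt_id (0 : ℝ)).const_add a).div_const h).ofReal_comp).pow (m i)
    simpa using this.const_mul A
  rw [pd, ← ((contDiff_stMono c h m).differentiable (by simp) z).lineDeriv_eq_fderiv,
    hderiv.lineDeriv, stMono_eq_mul_prod_erase c h _ i]
  have hA : ∏ k ∈ Finset.univ.erase i,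
      ((stCoord k (z - c) / h : ℝ) : ℂ) ^ (m - Pi.single i 1 : Option (Fin d) → ℕ) k = A :=
    Finset.prod_congr rfl fun k hk => by simp [Finset.ne_of_mem_erase hk]
  rw [hA, Pi.sub_apply, Pi.single_eq_same]
  push_cast
  ring

variable {κ : Type*} (s : Finset κ)

theorem pd_sum_stMono (b : κ → ℂ) (μ : κ → Option (Fin d) → ℕ) (i : Option (Fin d)) :
    pd (stDir i) (fun z => ∑ k ∈ s, b k * stMono c h (μ k) z) =
      fun z => ∑ k ∈ s, (b k * μ k i / h) * stMono c h (μ k - Pi.single i 1) z := by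
  funext z
  rw [pd_sum_const_mul b fun k _ => (contDiff_stMono c h (μ k)).differentiable (by simp) z]
  simp only [pd_stMono, mul_div_assoc, mul_assoc]

theorem iterate_pd_sum_stMono (b : κ → ℂ) (μ : κ → Option (Fin d) → ℕ) (i : Option (Fin d))
    (r : ℕ) : (pd (stDir i))^[r] (fun z => ∑ k ∈ s, b k * stMono c h (μ k) z) =
      fun z => ∑ k ∈ s, (b k * (μ k i).descFactorial r / h ^ r) *
        stMono c h (μ k - Pi.single i r) z := by
  induction r with
  | zero => simp
  | succ r ih =>
    rw [iterate_succ_apply', ih, pd_sum_stMono]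
    funext z
    refine Finset.sum_congr rfl fun k _ => ?_
    have hsub : μ k - Pi.single i r - Pi.single i 1 = μ k - Pi.single i (r + 1) := by
      ext j
      rcases eq_or_ne j i with rfl | hj
      · simp only [Pi.sub_apply, Pi.single_eq_same]
        omega
      · simp [hj]
    rw [hsub, Nat.descFactorial_succ]
    simp only [Pi.sub_apply, Pi.single_eq_same]
    push_cast
    ring

theorem iterPd_sum_stMono {L : List (Option (Fin d))} (hL : L.Nodup) {n : Option (Fin d) → ℕ}
    (hn : ∀ i ∉ L, n i = 0) (b : κ → ℂ) (μ : κ → Option (Fin d) → ℕ) :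
    iterPd stDir L n (fun z => ∑ k ∈ s, b k * stMono c h (μ k) z) =
      fun z => ∑ k ∈ s, (b k * ((L.map fun i => (μ k i).descFactorial (n i)).prod : ℕ) /
        h ^ (L.map n).sum) * stMono c h (μ k - n) z := by
  induction L generalizing n with
  | nil =>
    obtain rfl : n = 0 := funext fun i => hn i List.not_mem_nil
    simp [iterPd]
  | cons a L ih =>
    obtain ⟨haL, hL⟩ := List.nodup_cons.mp hL
    have hL' : ∀ i ∈ L, update n a 0 i = n i := fun i hi =>
      update_of_ne (ne_of_mem_of_not_mem hi haL) _ _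
    rw [iterPd_cons stDir haL, ih hL fun i => update_zero_eq_zero_of_not_mem hn,
      iterate_pd_sum_stMono, List.map_congr_left hL']
    funext z
    refine Finset.sum_congr rfl fun k _ => ?_
    rw [List.map_congr_left fun i hi => congrArg (μ k i).descFactorial (hL' i hi)]
    have hsub : μ k - update n a 0 - Pi.single a (n a) = μ k - n := by
      ext i
      rcases eq_or_ne i a with rfl | hia
      · simp
      · simp [hia]
    rw [hsub]
    simp only [Pi.sub_apply, update_self, tsub_zero, List.map_cons, List.prod_cons,
      List.sum_cons, pow_add]
    push_cast
    ring

theorem Dmi_sum_stMono_center (b : κ → ℂ) (μ : κ → Option (Fin d) → ℕ) (j : MI d) :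
    Dmi j (fun z => ∑ k ∈ s, b k * stMono c h (μ k) z) c =
      ∑ k ∈ s, if μ k = MI.equivPi j then b k * MI.fact j / h ^ MI.deg j else 0 := by
  rw [Dmi_eq_iterPd, iterPd_sum_stMono c h s nodup_stList fun i hi => absurd (mem_stList i) hi]
  refine Finset.sum_congr rfl fun k _ => ?_
  rw [prod_map_stList, sum_map_stList, ← MI.deg_eq_sum, stMono_center]
  split_ifs with hsub hk hk
  · simp [hk, Nat.descFactorial_self, MI.fact_eq_prod]
  · obtain ⟨i, hi⟩ : ∃ i, μ k i < MI.equivPi j i := by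
      by_contra! hge
      exact hk (funext fun i => le_antisymm (tsub_eq_zero_iff_le.mp (congrFun hsub i)) (hge i))
    have hzero : ∏ i, (μ k i).descFactorial (MI.equivPi j i) = 0 :=
      Finset.prod_eq_zero (Finset.mem_univ i) (Nat.descFactorial_eq_zero_iff_lt.mpr hi)
    simp [hzero]
  · exact absurd (hk ▸ tsub_self _) hsub
  · simp

end Monomial

section Polynomial

variable {d : ℕ} (c : Pt d) (h : ℝ) {p : ℕ} (C : MI d → ℂ)

theorem Dmi_poly_center {j : MI d} (hj : MI.deg j ≤ p) :
    Dmi j (fun z => ∑ k ∈ MIle d p, C k * monoC c h k z) c = C j * MI.fact j / h ^ MI.deg j := by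
  simp only [monoC_eq_stMono, Dmi_sum_stMono_center, MI.equivPi.injective.eq_iff]
  rw [Finset.sum_ite_eq' _ _ (fun k => C k * MI.fact j / h ^ MI.deg j), if_pos (mem_MIle.mpr hj)]

theorem Dmi_pd_pd_poly_center {j : MI d} (ℓ : Fin d) (hj : MI.deg j + 2 ≤ p) :
    Dmi j (pd (eDir d ℓ) (pd (eDir d ℓ) fun z => ∑ k ∈ MIle d p, C k * monoC c h k z)) c =
      C (MI.addX j ℓ 2) * (MI.fact j * ((j.1 ℓ + 1) * (j.1 ℓ + 2) : ℕ)) / h ^ (MI.deg j + 2) := by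
  simp only [monoC_eq_stMono]
  rw [show eDir d ℓ = stDir (some ℓ) from rfl, pd_sum_stMono, pd_sum_stMono,
    Dmi_sum_stMono_center, Finset.sum_eq_single (MI.addX j ℓ 2)]
  · have hsub : MI.equivPi j + Pi.single (some ℓ) 2 - Pi.single (some ℓ) 1 - Pi.single (some ℓ) 1
        = MI.equivPi j := by
      ext i
      rcases eq_or_ne i (some ℓ) with rfl | hi
      · simp
      · simp [hi]
    rw [MI.equivPi_addX]
    simp only [hsub, if_true, Pi.sub_apply, Pi.add_apply, Pi.single_eq_same, MI.equivPi_some]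
    rw [pow_add]
    push_cast
    ring
  · intro k _ hk
    split_ifs with hkj
    · have hlt : MI.equivPi k (some ℓ) < 2 := by
        by_contra! hge
        refine hk (MI.equivPi.injective ?_)
        rw [MI.equivPi_addX, ← hkj]
        ext i
        rcases eq_or_ne i (some ℓ) with rfl | hi
        · simp only [Pi.add_apply, Pi.sub_apply, Pi.single_eq_same]
          omega
        · simp [hi]
      interval_cases hkℓ : MI.equivPi k (some ℓ) <;> simp [hkℓ]
    · rfl
  · exact fun hk => absurd (mem_MIle.mpr (by rw [MI.deg_addX]; exact hj)) hk

end Polynomial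

theorem Dmi_Sop_eq {d N : ℕ} {K : Set (Pt d)} (hK : IsOpen K) {V : Pt d → ℝ}
    (hV : ContDiffOn ℝ N V K) {q : Pt d → ℂ} (hq : ContDiffOn ℝ (N + 2 : ℕ) q K) {j : MI d}
    (hj : MI.deg j ≤ N) {x : Pt d} (hx : x ∈ K) :
    Dmi j (Sop V q) x = Complex.I * Dmi (j.1, j.2 + 1) q x
      + 1 / 2 * ∑ ℓ, Dmi j (pd (eDir d ℓ) (pd (eDir d ℓ) q)) x
      - ∑ k ∈ MIbelow j, (MI.choose j k : ℂ) *
          (Dmi k q x * Dmi (MI.sub j k) (fun w => ((V w : ℝ) : ℂ)) x) := by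
  set W : Pt d → ℂ := fun w => ((V w : ℝ) : ℂ)
  have hW : ContDiffOn ℝ N W K := Complex.ofRealCLM.contDiff.comp_contDiffOn hV
  have hq₀ : ContDiffOn ℝ N q K := hq.of_le (by norm_cast; omega)
  have hq₂ : ∀ ℓ, ContDiffOn ℝ N (pd (eDir d ℓ) (pd (eDir d ℓ) q)) K := fun ℓ =>
    contDiffOn_pd hK (contDiffOn_pd hK hq _) _
  have hSop : Sop V q = fun z => ∑ i : Fin 3, ![Complex.I, 1 / 2, -1] i *
      ![pd (tDir d) q, fun z => ∑ ℓ, pd (eDir d ℓ) (pd (eDir d ℓ) q) z, fun z => q z * W z] i z :=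
    by
    funext z
    simp only [Sop, Fin.sum_univ_three, Matrix.cons_val_zero, Matrix.cons_val_one,
      Matrix.cons_val, W]
    ring
  have hlap : Dmi j (fun z => ∑ ℓ, pd (eDir d ℓ) (pd (eDir d ℓ) q) z) x =
      ∑ ℓ, Dmi j (pd (eDir d ℓ) (pd (eDir d ℓ) q)) x := by
    simpa using Dmi_sum_const_mul hK hj (fun _ => (1 : ℂ)) (fun ℓ _ => hq₂ ℓ) hx
  rw [hSop, Dmi_sum_const_mul hK hj _ ?reg hx]
  case reg =>
    intro i _
    fin_cases i
    · exact contDiffOn_pd hK (hq.of_le (by norm_cast; omega)) _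
    · exact (ContDiffOn.sum fun ℓ _ => hq₂ ℓ :
        ContDiffOn ℝ N (fun z => ∑ ℓ : Fin d, pd (eDir d ℓ) (pd (eDir d ℓ) q) z) K)
    · exact hq₀.mul hW
  simp only [Fin.sum_univ_three, Matrix.cons_val_zero, Matrix.cons_val_one, Matrix.cons_val]
  rw [hlap, Dmi_pd_tDir, Dmi_mul hK hj hq₀ hW hx]
  ring

theorem pow_mul_Dmi_Sop_center {d p : ℕ} {K : Set (Pt d)} (hK : IsOpen K) {c : Pt d} (hc : c ∈ K)
    {V : Pt d → ℝ} (hV : ContDiffOn ℝ (p - 2 : ℕ) V K) {h : ℝ} (hh : h ≠ 0) {C : MI d → ℂ}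
    {q : Pt d → ℂ} (hq : ∀ z, q z = ∑ k ∈ MIle d p, C k * monoC c h k z) {j : MI d}
    (hj : MI.deg j + 2 ≤ p) :
    (h : ℂ) ^ (MI.deg j + 2) * Dmi j (Sop V q) c =
      MI.fact j * (Complex.I * h * ((j.2 + 1 : ℕ) : ℂ) * C (j.1, j.2 + 1)
        + 1 / 2 * ∑ ℓ, (((j.1 ℓ + 1) * (j.1 ℓ + 2) : ℕ) : ℂ) * C (MI.addX j ℓ 2)
        - ∑ z ∈ MIbelow j, ((h ^ (MI.deg j - MI.deg z + 2) : ℝ) : ℂ) /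
            ((MI.fact (MI.sub j z) : ℕ) : ℂ) * Dmi (MI.sub j z) (fun w => ((V w : ℝ) : ℂ)) c
              * C z) := by
  have hq' : q = fun z => ∑ k ∈ MIle d p, C k * monoC c h k z := funext hq
  have hqK : ContDiffOn ℝ (p - 2 + 2 : ℕ) q K := hq' ▸ (ContDiff.sum fun k _ => contDiff_const.mul
    (by rw [monoC_eq_stMono]; exact (contDiff_stMono ..).of_le le_top)).contDiffOn
  rw [Dmi_Sop_eq hK hV hqK (by omega) hc]
  have hhC : (h : ℂ) ≠ 0 := Complex.ofReal_ne_zero.mpr hh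
  have htime : (h : ℂ) ^ (MI.deg j + 2) * Dmi (j.1, j.2 + 1) q c =
      MI.fact j * (h * ((j.2 + 1 : ℕ) : ℂ) * C (j.1, j.2 + 1)) := by
    rw [hq', Dmi_poly_center c h C (by rw [MI.deg_succ_snd]; omega), MI.fact_succ_snd,
      MI.deg_succ_snd]
    field_simp
    push_cast
    ring
  have hspace : (h : ℂ) ^ (MI.deg j + 2) * ∑ ℓ, Dmi j (pd (eDir d ℓ) (pd (eDir d ℓ) q)) c =
      MI.fact j * ∑ ℓ, (((j.1 ℓ + 1) * (j.1 ℓ + 2) : ℕ) : ℂ) * C (MI.addX j ℓ 2) := by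
    simp only [Finset.mul_sum]
    refine Finset.sum_congr rfl fun ℓ _ => ?_
    rw [hq', Dmi_pd_pd_poly_center c h C ℓ hj]
    field_simp
  have hpot : (h : ℂ) ^ (MI.deg j + 2) * ∑ z ∈ MIbelow j, (MI.choose j z : ℂ) *
      (Dmi z q c * Dmi (MI.sub j z) (fun w => ((V w : ℝ) : ℂ)) c) =
        MI.fact j * ∑ z ∈ MIbelow j, ((h ^ (MI.deg j - MI.deg z + 2) : ℝ) : ℂ) /
          ((MI.fact (MI.sub j z) : ℕ) : ℂ) * Dmi (MI.sub j z) (fun w => ((V w : ℝ) : ℂ)) c * C z :=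
      by
    simp only [Finset.mul_sum]
    refine Finset.sum_congr rfl fun z hz => ?_
    have hzj := mem_MIbelow.mp hz
    have hdeg := MI.deg_mono hzj
    rw [hq', Dmi_poly_center c h C (by omega), ← MI.choose_mul_fact_mul_fact hzj,
      show MI.deg j + 2 = MI.deg j - MI.deg z + 2 + MI.deg z by omega]
    have := (MI.fact_pos (MI.sub j z)).ne'
    push_cast
    field_simp
    ring
  linear_combination Complex.I * htime + 1 / 2 * hspace - hpot

theorem quasiTrefftz_coefficient_recurrence_general
    (d p : ℕ) (hd : 0 < d)
    (K : Set (Pt d)) (hK : IsOpen K) (cK : Pt d) (hcK : cK ∈ K)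
    (V : Pt d → ℝ) (hV : ContDiffOn ℝ (max (p - 2) 0 : ℕ) V K)
    (hs : ℝ) (hhs : 0 < hs)
    (C : MI d → ℂ) (q : Pt d → ℂ)
    (hrep : ∀ z : Pt d, q z = ∑ j ∈ MIle d p, C j * monoC cK hs j z)
    (hqQT : q ∈ QTset d p V cK) :
    ∀ j : MI d, MI.deg j + 2 ≤ p →
      C (MI.addX j ⟨0, hd⟩ 2) =
        (((j.1 ⟨0, hd⟩ + 1) * (j.1 ⟨0, hd⟩ + 2) : ℕ) : ℂ)⁻¹ *
          ( -2 * Complex.I * (hs : ℂ) * ((j.2 + 1 : ℕ) : ℂ) * C (j.1, j.2 + 1)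
            - ∑ ℓ ∈ Finset.univ.erase (⟨0, hd⟩ : Fin d),
                (((j.1 ℓ + 1) * (j.1 ℓ + 2) : ℕ) : ℂ) * C (MI.addX j ℓ 2)
            + 2 * ∑ z ∈ MIbelow j,
                ((hs ^ (MI.deg j - MI.deg z + 2) : ℝ) : ℂ) / ((MI.fact (MI.sub j z) : ℕ) : ℂ)
                  * Dmi (MI.sub j z) (fun w => ((V w : ℝ) : ℂ)) cK * C z ) := by
  intro j hj
  have hbracket := pow_mul_Dmi_Sop_center hK hcK (by simpa using hV) hhs.ne' hrep hj
  rw [hqQT.2 j hj, mul_zero, eq_comm, mul_eq_zero] at hbracket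
  have hzero := hbracket.resolve_left (Nat.cast_ne_zero.mpr (MI.fact_pos j).ne')
  rw [← Finset.add_sum_erase _ _ (Finset.mem_univ ⟨0, hd⟩)] at hzero
  rw [eq_inv_mul_iff_mul_eq₀ (Nat.cast_ne_zero.mpr (by positivity))]
  linear_combination 2 * hzero

/-- Recurrence relation among the coefficients of an element of
`QT^p(K)` expanded in the scaled monomial basis centered at `(x_K,t_K)` with scale `h_K`. -/
theorem quasiTrefftz_coefficient_recurrence
    (d p : ℕ) (hd : 0 < d) (hp : 1 ≤ p)
    (K : Set (Pt d)) (hK : IsOpen K) (cK : Pt d) (hcK : cK ∈ K)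
    (V : Pt d → ℝ) (hV : ContDiffOn ℝ (max (p - 2) 0 : ℕ) V K)
    (hs : ℝ) (hhs : 0 < hs)
    (C : MI d → ℂ) (q : Pt d → ℂ)
    (hrep : ∀ z : Pt d, q z = ∑ j ∈ MIle d p, C j * monoC cK hs j z)
    (hqQT : q ∈ QTset d p V cK) :
    ∀ j : MI d, MI.deg j + 2 ≤ p →
      C (MI.addX j ⟨0, hd⟩ 2) =
        (((j.1 ⟨0, hd⟩ + 1) * (j.1 ⟨0, hd⟩ + 2) : ℕ) : ℂ)⁻¹ *
          ( -2 * Complex.I * (hs : ℂ) * ((j.2 + 1 : ℕ) : ℂ) * C (j.1, j.2 + 1)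
            - ∑ ℓ ∈ Finset.univ.erase (⟨0, hd⟩ : Fin d),
                (((j.1 ℓ + 1) * (j.1 ℓ + 2) : ℕ) : ℂ) * C (MI.addX j ℓ 2)
            + 2 * ∑ z ∈ MIbelow j,
                ((hs ^ (MI.deg j - MI.deg z + 2) : ℝ) : ℂ) / ((MI.fact (MI.sub j z) : ℕ) : ℂ)
                  * Dmi (MI.sub j z) (fun w => ((V w : ℝ) : ℂ)) cK * C z ) :=
  quasiTrefftz_coefficient_recurrence_general d p hd K hK cK hcK V hV hs hhs C q hrep hqQT
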